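/- For all formulas φ₁, φ₂ of lexicographic logic and every truth assignment I, ⟦¬(φ₁ ≫ φ₂)⟧(I) = ⟦(¬φ₁) ≫ (¬φ₂)⟧(I). -/

import Mathlib

/-- The three truth symbols F, 0 (Z), T. -/
inductive TSym : Type
  | F | Z | T
deriving DecidableEq

open TSym

/-- The operation u ≫ v on lists of symbols. -/
def lexOp (u v : List TSym) : List TSym :=
  if u = [F] ∧ v = [F] then [F]
  else if u = [T] ∧ v = [T] then [T]
  else Z :: (u ++ v)

/-- The truth domain 𝕍 as an inductive predicate. -/
inductive Vmem : List TSym → Prop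
  | F : Vmem [F]
  | T : Vmem [T]
  | op {u v : List TSym} : Vmem u → Vmem v → Vmem (lexOp u v)

def symRank : TSym → ℕ
  | F => 0 | Z => 1 | T => 2

/-- The order F < 0 < T on symbols. -/
def symLt (a b : TSym) : Prop := symRank a < symRank b

/-- Lexicographic order on lists induced by F < 0 < T. -/
def listLt (u v : List TSym) : Prop := List.Lex symLt u v

/-- Pointwise negation F ↦ T, T ↦ F, 0 ↦ 0. -/
def symNeg : TSym → TSym
  | F => T | T => F | Z => Z

def negList (v : List TSym) : List TSym := v.map symNeg

def symVal : TSym → ℚ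
  | F => -1 | Z => 0 | T => 1

/-- val([u₁,…,u_n]) = Σ symVal(u_i) · (1/3)^(i-1). -/
def val : List TSym → ℚ
  | [] => 0
  | a :: t => symVal a + val t / 3

open Classical in
/-- Lexicographic minimum. -/
noncomputable def minL (u v : List TSym) : List TSym := if listLt u v then u else v

open Classical in
/-- Lexicographic maximum. -/
noncomputable def maxL (u v : List TSym) : List TSym := if listLt u v then v else u

/-- Formulas of lexicographic logic. -/
inductive Formula (α : Type) : Type
  | atom : α → Formula α
  | and : Formula α → Formula α → Formula α
  | or : Formula α → Formula α → Formula α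
  | neg : Formula α → Formula α
  | lex : Formula α → Formula α → Formula α

/-- Semantics of lexicographic logic. -/
noncomputable def eval {α : Type} (I : α → List TSym) : Formula α → List TSym
  | Formula.atom a => I a
  | Formula.and φ ψ => minL (eval I φ) (eval I ψ)
  | Formula.or φ ψ => maxL (eval I φ) (eval I ψ)
  | Formula.neg φ => negList (eval I φ)
  | Formula.lex φ ψ => lexOp (eval I φ) (eval I ψ)

theorem symNeg_involutive : Function.Involutive symNeg := by
  intro a; cases a <;> rfl

theorem negList_injective : Function.Injective negList :=
  List.map_injective_iff.2 symNeg_involutive.injective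

theorem negList_eq_singleton_F {u : List TSym} : negList u = [F] ↔ u = [T] :=
  negList_injective.eq_iff' rfl

theorem negList_eq_singleton_T {u : List TSym} : negList u = [T] ↔ u = [F] :=
  negList_injective.eq_iff' rfl

theorem negList_lexOp (u v : List TSym) :
    negList (lexOp u v) = lexOp (negList u) (negList v) := by
  simp only [lexOp, negList_eq_singleton_F, negList_eq_singleton_T]
  split_ifs <;> simp_all [negList, symNeg]

theorem neg_lex_general {α : Type} (φ₁ φ₂ : Formula α) (I : α → List TSym) :
    eval I (Formula.neg (Formula.lex φ₁ φ₂)) =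
      eval I (Formula.lex (Formula.neg φ₁) (Formula.neg φ₂)) :=
  negList_lexOp _ _

theorem neg_lex {α : Type} (φ₁ φ₂ : Formula α) (I : α → List TSym)
    (hI : ∀ a, Vmem (I a)) :
    eval I (Formula.neg (Formula.lex φ₁ φ₂)) =
      eval I (Formula.lex (Formula.neg φ₁) (Formula.neg φ₂)) :=
  neg_lex_general φ₁ φ₂ I
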